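/- arXiv:2103.15192 — 7 statements merged into one kernel-verified Lean document; each statement's English description precedes it below -/
import Mathlib

section
/- Let p be a prime and let g ∈ 𝔽_p[[z]] be algebraic over 𝔽_p(z), i.e. there exist polynomials q_0,…,q_m ∈ 𝔽_p[z], not all zero, such that Σ_{i=0}^{m} q_i(z)·g(z)^i = 0 in 𝔽_p[[z]]. Then there exists an integer l > 0 such that Λ_p^{2l}(g) = Λ_p^{l}(g). -/
/-!
Scaling `g` by the leading coefficient of its annihilating polynomial makes it integral over the
noetherian ring `𝔽_p[z]`, so the Frobenius powers `g ^ p ^ j` are linearly dependent over `𝔽_p[z]`.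
Starting the relation at its first nonzero coefficient gives, for `u = g ^ p ^ j₀`, a relation
`∑_{k ≤ N} c_k u ^ p ^ k = 0` with `c₀ ≠ 0`. Since `Λ_p (F * h ^ p) = Λ_p F * h` and `Λ_p` divides
degrees of polynomials by `p`, multiplying by `c₀ ^ p` and applying `Λ_p` keeps `c₀ * Λ_p^n u` in
the finite set of sums `∑_{k ≤ N} P_k u ^ p ^ k` with `deg P_k ≤ max deg c_k`. So the `Λ_p`-orbit
of `u`, and with it that of `g = Λ_p^{j₀} u`, is eventually periodic.
-/

/-- The Cartier-type operator `Λ_p` on `K[[z]]`, sending `∑ a(n) zⁿ` to `∑ a(np) zⁿ`. -/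
noncomputable def cartier {K : Type*} [Semiring K] (p : ℕ) (f : PowerSeries K) :
    PowerSeries K :=
  PowerSeries.mk fun n => PowerSeries.coeff (n * p) f

open PowerSeries Finset
open scoped Polynomial

theorem exists_shifted_relation_of_not_linearIndependent {R M : Type*} [Ring R] [AddCommGroup M]
    [Module R M] {v : ℕ → M} (hv : ¬LinearIndependent R v) :
    ∃ j N : ℕ, ∃ c : ℕ → R, c 0 ≠ 0 ∧ ∑ k ∈ range (N + 1), c k • v (j + k) = 0 := by
  classical
  obtain ⟨l, hl, hl0⟩ : ∃ l : ℕ →₀ R, Finsupp.linearCombination R v l = 0 ∧ l ≠ 0 := by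
    simpa [linearIndependent_iff] using hv
  have hex : ∃ i, l i ≠ 0 := by simpa [Finsupp.ext_iff] using hl0
  obtain ⟨N, hN⟩ := l.support.exists_nat_subset_range
  let j := Nat.find hex
  refine ⟨j, N, fun k => l (j + k), Nat.find_spec hex, ?_⟩
  have hsupp : l.support ⊆ range (j + (N + 1)) := hN.trans (range_subset_range.2 (by omega))
  have hlow : ∑ i ∈ range j, l i • v i = 0 :=
    sum_eq_zero fun i hi => by rw [not_not.1 (Nat.find_min hex (mem_range.1 hi)), zero_smul]
  rwa [Finsupp.linearCombination_apply, Finsupp.sum_of_support_subset l hsupp _ (by simp),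
    sum_range_add, hlow, zero_add] at hl

theorem exists_relation_pow_pow_of_isAlgebraic {A S : Type*} [CommRing A] [IsDomain A]
    [IsNoetherianRing A] [CommRing S] [Algebra A S] {g : S} (hg : IsAlgebraic A g) (n : ℕ) :
    ∃ j N : ℕ, ∃ c : ℕ → A, c 0 ≠ 0 ∧ ∑ k ∈ range (N + 1), c k • (g ^ n ^ j) ^ n ^ k = 0 := by
  obtain ⟨P, hP0, hPg⟩ := hg
  set a := P.leadingCoeff
  have ha : a ≠ 0 := Polynomial.leadingCoeff_ne_zero.2 hP0
  have := Algebra.finite_adjoin_simple_of_isIntegral (isIntegral_leadingCoeff_smul P g hPg)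
  have hdep : ¬LinearIndependent A fun i => (a • g) ^ n ^ i := fun hli => by
    have := LinearIndependent.finite_of_isNoetherian
      (v := fun i => (⟨(a • g) ^ n ^ i, pow_mem (Algebra.self_mem_adjoin_singleton A _) _⟩ :
        Algebra.adjoin A {a • g}))
      (.of_comp (Algebra.adjoin A {a • g}).val.toLinearMap hli)
    exact not_finite ℕ
  obtain ⟨j, N, c, hc0, hc⟩ := exists_shifted_relation_of_not_linearIndependent hdep
  refine ⟨j, N, fun k => c k * a ^ n ^ (j + k), mul_ne_zero hc0 (pow_ne_zero _ ha), ?_⟩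
  simpa [smul_pow, mul_smul, ← pow_mul, ← pow_add] using hc

theorem polynomial_smul_eq_coe_mul {R : Type*} [CommSemiring R] (P : R[X]) (f : R⟦X⟧) :
    P • f = (P : R⟦X⟧) * f := by
  rw [Algebra.smul_def, algebraMap_apply', Algebra.algebraMap_self, map_id, id]

theorem isAlgebraic_of_sum_coe_mul_pow_eq_zero {R : Type*} [CommRing R] {g : R⟦X⟧} {m : ℕ}
    {q : ℕ → R[X]} (hq : ∃ i, i ≤ m ∧ q i ≠ 0)
    (h : ∑ i ∈ range (m + 1), (q i : R⟦X⟧) * g ^ i = 0) : IsAlgebraic R[X] g := by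
  obtain ⟨i, hi, hqi⟩ := hq
  refine ⟨∑ k ∈ range (m + 1), Polynomial.monomial k (q k), fun h0 => hqi ?_, ?_⟩
  · simpa [Polynomial.finsetSum_coeff, Polynomial.coeff_monomial, Nat.lt_succ_of_le hi] using
      congrArg (Polynomial.coeff · i) h0
  · simpa [Polynomial.aeval_monomial, ← polynomial_smul_eq_coe_mul, Algebra.smul_def] using h

theorem Function.exists_iterate_two_mul_eq_of_iterate_eq {α : Type*} {f : α → α} {x : α}
    {i j : ℕ} (hij : i < j) (h : f^[i] x = f^[j] x) : ∃ l, 0 < l ∧ f^[2 * l] x = f^[l] x := by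
  have hper : IsPeriodicPt f (j - i) (f^[i] x) := by
    rw [IsPeriodicPt, IsFixedPt, ← iterate_add_apply, Nat.sub_add_cancel hij.le, h]
  refine ⟨(j - i) * (i + 1), Nat.mul_pos (Nat.sub_pos_of_lt hij) i.succ_pos, ?_⟩
  have hl : i ≤ (j - i) * (i + 1) := by nlinarith [Nat.sub_pos_of_lt hij]
  have := (hper.apply_iterate ((j - i) * (i + 1) - i)).mul_const (i + 1)
  rwa [← iterate_add_apply, Nat.sub_add_cancel hl, IsPeriodicPt, IsFixedPt,
    ← iterate_add_apply, ← two_mul] at this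

section Cartier

variable {R : Type*}

theorem coeff_cartier [Semiring R] (p n : ℕ) (f : R⟦X⟧) :
    coeff n (cartier p f) = coeff (n * p) f :=
  coeff_mk _ _

theorem cartier_zero [Semiring R] (p : ℕ) : cartier p (0 : R⟦X⟧) = 0 := by
  ext n
  simp [coeff_cartier]

theorem cartier_sum [Semiring R] {ι : Type*} (p : ℕ) (s : Finset ι) (f : ι → R⟦X⟧) :
    cartier p (∑ i ∈ s, f i) = ∑ i ∈ s, cartier p (f i) := by
  ext n
  simp only [coeff_cartier, map_sum]

theorem cartier_expand [CommRing R] {p : ℕ} (hp : p ≠ 0) (f : R⟦X⟧) :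
    cartier p (expand p hp f) = f := by
  ext n
  rw [coeff_cartier, mul_comm, coeff_expand_mul]

theorem cartier_mul_expand [CommRing R] {p : ℕ} (hp : p ≠ 0) (F f : R⟦X⟧) :
    cartier p (F * expand p hp f) = cartier p F * f := by
  ext n
  let e : ℕ × ℕ ↪ ℕ × ℕ :=
    ⟨Prod.map (· * p) (· * p), (mul_left_injective₀ hp).prodMap (mul_left_injective₀ hp)⟩
  rw [coeff_cartier, coeff_mul, coeff_mul]
  simp_rw [coeff_cartier]
  conv_rhs => enter [2, x]; rw [← coeff_expand_mul p hp f, mul_comm p]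
  -- only the pairs `(a, b)` with `p ∣ b` contribute, and those are the `(i * p, j * p)`
  refine Eq.trans ?_ (sum_map (antidiagonal n) e fun x => coeff x.1 F * coeff x.2 (expand p hp f))
  refine (sum_subset ?_ ?_).symm
  · intro x hx
    obtain ⟨y, hy, rfl⟩ := mem_map.1 hx
    rw [HasAntidiagonal.mem_antidiagonal] at hy ⊢
    simp only [e, Function.Embedding.coeFn_mk, Prod.map_fst, Prod.map_snd]
    rw [← add_mul, hy]
  · rintro ⟨a, b⟩ hab hne
    rw [HasAntidiagonal.mem_antidiagonal] at hab
    by_cases hb : p ∣ b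
    · obtain ⟨k, rfl⟩ := hb
      have hk : k ≤ n := by nlinarith [Nat.pos_of_ne_zero hp]
      refine absurd (mem_map.2 ⟨(n - k, k), HasAntidiagonal.mem_antidiagonal.2 (by omega), ?_⟩) hne
      simp only [e, Function.Embedding.coeFn_mk, Prod.map, Prod.mk.injEq]
      constructor
      · rw [Nat.sub_mul, mul_comm k p]; omega
      · ring
    · simp [coeff_expand_of_not_dvd p hp f hb]

theorem coe_trunc_cartier [Semiring R] {p d : ℕ} (hp : p ≠ 0) {P : R[X]}
    (hP : P.natDegree ≤ p * d) : ((trunc (d + 1) (cartier p P) : R[X]) : R⟦X⟧) = cartier p P := by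
  ext n
  rw [Polynomial.coeff_coe, coeff_trunc]
  split_ifs with hn
  · rfl
  · rw [coeff_cartier, Polynomial.coeff_coe, Polynomial.coeff_eq_zero_of_natDegree_lt]
    nlinarith [Nat.pos_of_ne_zero hp]

theorem finite_setOf_natDegree_le [Semiring R] [Finite R] (d : ℕ) :
    {P : R[X] | P.natDegree ≤ d}.Finite := by
  have : Finite (Polynomial.degreeLT R (d + 1)) :=
    Finite.of_equiv _ (Polynomial.degreeLTEquiv R (d + 1)).toEquiv.symm
  convert (Polynomial.degreeLT R (d + 1) : Set R[X]).toFinite using 1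
  ext P
  simp [Polynomial.degreeLT_succ_eq_degreeLE, Polynomial.mem_degreeLE,
    Polynomial.natDegree_le_iff_degree_le]

def frobeniusCombinations [Semiring R] (p N d : ℕ) (u : R⟦X⟧) : Set R⟦X⟧ :=
  {f | ∃ P : ℕ → R[X], (∀ k, (P k).natDegree ≤ d) ∧
    f = ∑ k ∈ range (N + 1), (P k : R⟦X⟧) * u ^ p ^ k}

theorem frobeniusCombinations_finite [Semiring R] [Finite R] (p N d : ℕ) (u : R⟦X⟧) :
    (frobeniusCombinations p N d u).Finite := by
  refine ((Set.Finite.pi fun _ => finite_setOf_natDegree_le d).image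
    fun P : Fin (N + 1) → R[X] => ∑ k, (P k : R⟦X⟧) * u ^ p ^ (k : ℕ)).subset ?_
  rintro f ⟨P, hP, rfl⟩
  exact ⟨fun k => P k, fun k _ => hP k, (sum_range fun k => (P k : R⟦X⟧) * u ^ p ^ k).symm⟩

end Cartier

section PrimeField

variable {p : ℕ} [hp : Fact p.Prime]

theorem pow_char_eq_expand (f : (ZMod p)⟦X⟧) : f ^ p = expand p hp.out.ne_zero f := by
  have := MvPowerSeries.map_frobenius_expand (σ := Unit) p hp.out.ne_zero (f := f)
  rw [ZMod.frobenius_zmod, MvPowerSeries.map_id] at this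
  exact this.symm

theorem cartier_mul_pow_char (F f : (ZMod p)⟦X⟧) : cartier p (F * f ^ p) = cartier p F * f := by
  rw [pow_char_eq_expand, cartier_mul_expand]

theorem cartier_iterate_pow_pow (f : (ZMod p)⟦X⟧) (j : ℕ) : (cartier p)^[j] (f ^ p ^ j) = f := by
  induction j with
  | zero => simp
  | succ j ih =>
    rw [Function.iterate_succ_apply, pow_succ, pow_mul, pow_char_eq_expand, cartier_expand, ih]

theorem mul_cartier_mem_frobeniusCombinations_of_pow_mul_eq {u f : (ZMod p)⟦X⟧} {N d : ℕ}
    {b : (ZMod p)[X]} {Q : ℕ → (ZMod p)[X]} (hQ0 : Q 0 = 0)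
    (hQdeg : ∀ k ≤ N, (Q k).natDegree ≤ p * d)
    (hpow : (b : (ZMod p)⟦X⟧) ^ p * f = ∑ k ∈ range (N + 1), (Q k : (ZMod p)⟦X⟧) * u ^ p ^ k) :
    (b : (ZMod p)⟦X⟧) * cartier p f ∈ frobeniusCombinations p N d u := by
  have hcart : (b : (ZMod p)⟦X⟧) * cartier p f =
      ∑ k ∈ range N, (cartier p (Q (k + 1) : (ZMod p)⟦X⟧)) * u ^ p ^ k := by
    rw [mul_comm, ← cartier_mul_pow_char, mul_comm, hpow, cartier_sum, sum_range_succ', hQ0,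
      Polynomial.coe_zero, zero_mul, cartier_zero, add_zero]
    refine sum_congr rfl fun k _ => ?_
    rw [pow_succ, pow_mul, cartier_mul_pow_char]
  refine ⟨fun k => if k < N then trunc (d + 1) (cartier p (Q (k + 1) : (ZMod p)⟦X⟧)) else 0,
    fun k => ?_, ?_⟩
  · dsimp only
    split_ifs
    · exact Nat.lt_succ_iff.1 (natDegree_trunc_lt _ _)
    · simp
  · rw [hcart, sum_range_succ]
    dsimp only
    rw [if_neg (lt_irrefl N), Polynomial.coe_zero, zero_mul, add_zero]
    refine sum_congr rfl fun k hk => ?_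
    rw [if_pos (mem_range.1 hk), coe_trunc_cartier hp.out.ne_zero (hQdeg _ (mem_range.1 hk))]

theorem mul_cartier_mem_frobeniusCombinations {u f : (ZMod p)⟦X⟧} {N d : ℕ}
    {c : ℕ → (ZMod p)[X]} (hc : ∀ k ≤ N, (c k).natDegree ≤ d)
    (hrel : ∑ k ∈ range (N + 1), (c k : (ZMod p)⟦X⟧) * u ^ p ^ k = 0)
    (hf : (c 0 : (ZMod p)⟦X⟧) * f ∈ frobeniusCombinations p N d u) :
    (c 0 : (ZMod p)⟦X⟧) * cartier p f ∈ frobeniusCombinations p N d u := by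
  obtain ⟨P, hP, hPf⟩ := hf
  have hp2 : 2 ≤ p := hp.out.two_le
  set b := c 0
  -- subtracting `P 0` times the relation cancels the `u ^ p ^ 0` term
  let Q : ℕ → (ZMod p)[X] := fun k => b ^ (p - 2) * (b * P k - P 0 * c k)
  have hb : b.natDegree ≤ d := hc 0 (Nat.zero_le _)
  refine mul_cartier_mem_frobeniusCombinations_of_pow_mul_eq (Q := Q)
    (by simp only [Q, b, mul_comm (c 0), sub_self, mul_zero]) (fun k hk => ?_) ?_
  · have := Polynomial.natDegree_mul_le_of_le (Polynomial.natDegree_pow_le_of_le (p - 2) hb)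
      (Polynomial.natDegree_sub_le_of_le (Polynomial.natDegree_mul_le_of_le hb (hP k))
        (Polynomial.natDegree_mul_le_of_le (hP 0) (hc k hk)))
    rwa [max_self, ← two_mul, ← add_mul, Nat.sub_add_cancel hp2] at this
  · calc (b : (ZMod p)⟦X⟧) ^ p * f
        = b ^ (p - 2) * (b * (b * f) - P 0 * ∑ k ∈ range (N + 1), c k * u ^ p ^ k) := by
          rw [hrel, mul_zero, sub_zero, ← mul_assoc, ← mul_assoc, ← pow_succ, ← pow_succ,
            Nat.sub_add_cancel hp2]
      _ = _ := by
          rw [hPf, mul_sum, mul_sum, ← sum_sub_distrib, mul_sum]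
          refine sum_congr rfl fun k _ => ?_
          simp only [Q, Polynomial.coe_mul, Polynomial.coe_sub, Polynomial.coe_pow]
          ring

theorem exists_lt_cartier_iterate_eq {u : (ZMod p)⟦X⟧} {N : ℕ} {c : ℕ → (ZMod p)[X]}
    (hc0 : c 0 ≠ 0) (hrel : ∑ k ∈ range (N + 1), (c k : (ZMod p)⟦X⟧) * u ^ p ^ k = 0) :
    ∃ i j, i < j ∧ (cartier p)^[i] u = (cartier p)^[j] u := by
  set d := (range (N + 1)).sup fun k => (c k).natDegree
  have hc : ∀ k ≤ N, (c k).natDegree ≤ d := fun k hk =>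
    le_sup (f := fun k => (c k).natDegree) (mem_range.2 (Nat.lt_succ_of_le hk))
  have hmem : ∀ n, (c 0 : (ZMod p)⟦X⟧) * (cartier p)^[n] u ∈ frobeniusCombinations p N d u := by
    intro n
    induction n with
    | zero =>
      refine ⟨fun k => if k = 0 then c 0 else 0, fun k => ?_, ?_⟩
      · dsimp only
        split_ifs
        · exact hc 0 (Nat.zero_le _)
        · simp
      · simp [sum_range_succ']
    | succ n ih =>
      rw [Function.iterate_succ_apply']
      exact mul_cartier_mem_frobeniusCombinations hc hrel ih
  obtain ⟨i, j, hij, h⟩ :=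
    (frobeniusCombinations_finite p N d u).exists_lt_map_eq_of_forall_mem hmem
  exact ⟨i, j, hij, mul_left_cancel₀ (Polynomial.coe_eq_zero_iff.not.2 hc0) h⟩

end PrimeField

/-- If `g ∈ 𝔽_p[[z]]` is algebraic over `𝔽_p(z)`, i.e. annihilates a nonzero polynomial with
polynomial coefficients, then there is an integer `l > 0` with `Λ_p^{2l}(g) = Λ_p^{l}(g)`. -/
theorem stmt3 (p : ℕ) (hp : p.Prime) (g : PowerSeries (ZMod p)) (m : ℕ)
    (q : ℕ → Polynomial (ZMod p)) (hq : ∃ i, i ≤ m ∧ q i ≠ 0)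
    (halg : ∑ i ∈ Finset.range (m + 1), ((q i : PowerSeries (ZMod p)) * g ^ i) = 0) :
    ∃ l : ℕ, 0 < l ∧ (cartier p)^[2 * l] g = (cartier p)^[l] g := by
  have : Fact p.Prime := ⟨hp⟩
  have hg : IsAlgebraic (ZMod p)[X] g := isAlgebraic_of_sum_coe_mul_pow_eq_zero hq halg
  obtain ⟨j, N, c, hc0, hrel⟩ := exists_relation_pow_pow_of_isAlgebraic hg p
  simp only [polynomial_smul_eq_coe_mul] at hrel
  obtain ⟨i, i', hii', hu⟩ := exists_lt_cartier_iterate_eq hc0 hrel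
  refine Function.exists_iterate_two_mul_eq_of_iterate_eq hii' ?_
  rw [← cartier_iterate_pow_pow g j, Function.Commute.iterate_iterate_self, hu,
    ← Function.Commute.iterate_iterate_self]
end

section
/- Let p be a prime and k a finite field of characteristic p. Let L = (d/dz)^n + a_1(z)(d/dz)^{n−1} + ⋯ + a_n(z) with a_i ∈ k(z) be a monic differential operator of order n which is fuchsian, for which zero is a regular singular point, and all of whose exponents at zero are equal to zero. If the set Ker(k(z), L) = { P ∈ k(z) : L(P) = 0 } of rational solutions of L is nonzero, then Ker(k(z), L) is a k(z^p)-vector space of dimension exactly 1. -/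
/-!
A nonzero solution `y` of `L` is `z ^ m * u` with `u` a unit at `0`. Multiplying `L y = 0` by
`z ^ n / z ^ m` and evaluating at `0` shows that `m` is a root of the indicial polynomial, which
is `x ^ n`; hence `p ∣ m`. In particular the elements of `k(z^p)`, which solve `d/dz`, have order
divisible by `p`.

Every `f ∈ k(z)` is `∑_{i<p} cᵢ zⁱ` with `cᵢ ∈ k(z^p)` (write `f = N D^(p-1) / D^p` and sort the
monomials of the numerator by their degree mod `p`). For solutions `P ≠ 0` and `Q` with
`Q / P = ∑ cᵢ zⁱ`, the nonzero terms `cᵢ zⁱ` with `i ≥ 1` have pairwise distinct orders, none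
divisible by `p`, so their sum `g` has order prime to `p` unless `g = 0`. But `Q - c₀ P = g P`
is again a solution, so its order is divisible by `p`; thus `g = 0` and `Q = c₀ P`.
-/

/-- The derivative of a rational function, computed via the quotient rule on the reduced
representation `num/denom`. -/
noncomputable def ratDeriv {k : Type*} [Field k] (f : RatFunc k) : RatFunc k :=
  (algebraMap (Polynomial k) (RatFunc k) (Polynomial.derivative f.num) *
      algebraMap (Polynomial k) (RatFunc k) f.denom -
    algebraMap (Polynomial k) (RatFunc k) f.num *
      algebraMap (Polynomial k) (RatFunc k) (Polynomial.derivative f.denom)) /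
  algebraMap (Polynomial k) (RatFunc k) (f.denom ^ 2)

namespace Polynomial

theorem exists_eq_X_pow_mul_of_ne_zero {R : Type*} [CommRing R] {A : R[X]} (hA : A ≠ 0) :
    ∃ (a : ℕ) (A₁ : R[X]), A₁.eval 0 ≠ 0 ∧ A = X ^ a * A₁ := by
  obtain ⟨A₁, hA₁, hndvd⟩ := A.exists_eq_pow_rootMultiplicity_mul_and_not_dvd hA 0
  refine ⟨_, A₁, fun h => hndvd ?_, by simpa using hA₁⟩
  simpa [X_dvd_iff, coeff_zero_eq_eval_zero] using h

theorem exists_eq_sum_X_pow_mul_expand {R : Type*} [CommSemiring R] {p : ℕ} (hp : 0 < p)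
    (W : R[X]) : ∃ U : ℕ → R[X], W = ∑ i ∈ Finset.range p, X ^ i * expand R p (U i) := by
  induction W using Polynomial.induction_on' with
  | add f g hf hg =>
    obtain ⟨U, rfl⟩ := hf
    obtain ⟨V, rfl⟩ := hg
    exact ⟨U + V, by simp only [Pi.add_apply, map_add, mul_add, Finset.sum_add_distrib]⟩
  | monomial e c =>
    refine ⟨fun i => if i = e % p then monomial (e / p) c else 0, ?_⟩
    simp only [apply_ite, map_zero, mul_zero, Finset.sum_ite_eq',
      Finset.mem_range, Nat.mod_lt e hp, if_true, expand_monomial]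
    rw [← C_mul_X_pow_eq_monomial, ← C_mul_X_pow_eq_monomial, mul_left_comm, ← pow_add,
      Nat.mod_add_div']

end Polynomial

namespace RatFunc

open Polynomial

variable {k : Type*} [Field k]

local notation "ev₀" => RatFunc.eval (RingHom.id _) 0

theorem ratDeriv_div_algebraMap (A : k[X]) {B : k[X]} (hB : B ≠ 0) :
    ratDeriv (algebraMap k[X] (RatFunc k) A / algebraMap k[X] (RatFunc k) B) =
      algebraMap k[X] (RatFunc k) (derivative A * B - A * derivative B) /
        algebraMap k[X] (RatFunc k) (B ^ 2) := by
  set f := algebraMap k[X] (RatFunc k) A / algebraMap k[X] (RatFunc k) B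
  have hcross : f.num * B = A * f.denom := (num_mul_eq_mul_denom_iff hB).mpr rfl
  have hcross' := congrArg derivative hcross
  simp only [derivative_mul] at hcross'
  rw [ratDeriv, div_eq_div_iff (algebraMap_ne_zero (pow_ne_zero 2 (denom_ne_zero f)))
    (algebraMap_ne_zero (pow_ne_zero 2 hB))]
  simp only [← map_mul, ← map_sub]
  congr 1
  linear_combination B * f.denom * hcross' -
    (derivative B * f.denom + B * derivative f.denom) * hcross

theorem ratDeriv_algebraMap (A : k[X]) :
    ratDeriv (algebraMap k[X] (RatFunc k) A) = algebraMap k[X] (RatFunc k) (derivative A) := by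
  simpa using ratDeriv_div_algebraMap A one_ne_zero

theorem ratDeriv_add (f g : RatFunc k) : ratDeriv (f + g) = ratDeriv f + ratDeriv g := by
  have hf := denom_ne_zero f
  have hg := denom_ne_zero g
  have hsum : f + g = algebraMap k[X] (RatFunc k) (f.num * g.denom + f.denom * g.num) /
      algebraMap k[X] (RatFunc k) (f.denom * g.denom) := by
    conv_lhs => rw [← num_div_denom f, ← num_div_denom g]
    rw [div_add_div _ _ (algebraMap_ne_zero hf) (algebraMap_ne_zero hg)]
    simp only [map_add, map_mul]
  conv_rhs => rw [← num_div_denom f, ← num_div_denom g]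
  rw [hsum, ratDeriv_div_algebraMap _ (mul_ne_zero hf hg), ratDeriv_div_algebraMap _ hf,
    ratDeriv_div_algebraMap _ hg]
  have hf' := algebraMap_ne_zero (K := k) hf
  have hg' := algebraMap_ne_zero (K := k) hg
  simp only [map_mul, map_sub, map_add, map_pow, derivative_mul]
  field_simp
  ring

theorem ratDeriv_mul (f g : RatFunc k) : ratDeriv (f * g) = ratDeriv f * g + f * ratDeriv g := by
  have hf := denom_ne_zero f
  have hg := denom_ne_zero g
  have hprod : f * g = algebraMap k[X] (RatFunc k) (f.num * g.num) /
      algebraMap k[X] (RatFunc k) (f.denom * g.denom) := by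
    conv_lhs => rw [← num_div_denom f, ← num_div_denom g]
    rw [div_mul_div_comm, map_mul, map_mul]
  conv_rhs => rw [← num_div_denom f, ← num_div_denom g]
  rw [hprod, ratDeriv_div_algebraMap _ (mul_ne_zero hf hg), ratDeriv_div_algebraMap _ hf,
    ratDeriv_div_algebraMap _ hg]
  have hf' := algebraMap_ne_zero (K := k) hf
  have hg' := algebraMap_ne_zero (K := k) hg
  simp only [map_mul, map_sub, map_add, map_pow, derivative_mul]
  field_simp
  ring

theorem ratDeriv_C (c : k) : ratDeriv (C c) = 0 := by
  simpa using ratDeriv_algebraMap (Polynomial.C c)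

theorem ratDeriv_X : ratDeriv (X : RatFunc k) = 1 := by
  simpa using ratDeriv_algebraMap (Polynomial.X : k[X])

noncomputable def ratDerivation : Derivation k (RatFunc k) (RatFunc k) :=
  Derivation.mk'
    { toFun := ratDeriv
      map_add' := ratDeriv_add
      map_smul' := fun c f => by
        simp only [smul_eq_C_mul, ratDeriv_mul, ratDeriv_C, RingHom.id_apply]
        ring }
    fun f g => by
      change ratDeriv (f * g) = f * ratDeriv g + g * ratDeriv f
      rw [ratDeriv_mul]
      ring

@[simp]
theorem coe_ratDerivation : ⇑(ratDerivation : Derivation k (RatFunc k) (RatFunc k)) = ratDeriv :=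
  rfl

variable (k) in
noncomputable def powSubfield (p : ℕ) : Subfield (RatFunc k) :=
  Subfield.closure (Set.range (C : k →+* RatFunc k) ∪ {X ^ p})

theorem ratDeriv_eq_zero_of_mem_powSubfield {p : ℕ} [CharP k p] {f : RatFunc k}
    (hf : f ∈ powSubfield k p) : ratDeriv f = 0 := by
  simp only [← coe_ratDerivation (k := k)]
  induction hf using Subfield.closure_induction with
  | mem x hx =>
    rcases hx with ⟨c, rfl⟩ | rfl
    · exact ratDeriv_C c
    · rw [Derivation.leibniz_pow, nsmul_eq_mul, CharP.cast_eq_zero, zero_mul]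
  | one => exact Derivation.map_one_eq_zero _
  | add x y _ _ hx hy => rw [map_add, hx, hy, add_zero]
  | neg x _ hx => rw [map_neg, hx, neg_zero]
  | inv x _ hx => rw [Derivation.leibniz_inv, hx, smul_zero]
  | mul x y _ _ hx hy => rw [Derivation.leibniz, hx, hy, smul_zero, smul_zero, add_zero]

theorem algebraMap_expand_mem_powSubfield (p : ℕ) (E : k[X]) :
    algebraMap k[X] (RatFunc k) (expand k p E) ∈ powSubfield k p := by
  induction E using Polynomial.induction_on' with
  | add f g hf hg => rw [map_add, map_add]; exact add_mem hf hg
  | monomial n a =>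
    rw [expand_monomial, ← C_mul_X_pow_eq_monomial, map_mul, map_pow, algebraMap_C,
      algebraMap_X, pow_mul']
    have hC : C a ∈ powSubfield k p := Subfield.subset_closure (Or.inl ⟨a, rfl⟩)
    have hXp : X ^ p ∈ powSubfield k p := Subfield.subset_closure (Or.inr rfl)
    exact mul_mem hC (pow_mem hXp n)

theorem exists_eq_sum_mul_X_pow (p : ℕ) [ExpChar k p] (f : RatFunc k) :
    ∃ c : ℕ → RatFunc k, (∀ i, c i ∈ powSubfield k p) ∧
      f = ∑ i ∈ Finset.range p, c i * X ^ i := by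
  have hp : 0 < p := expChar_pos k p
  obtain ⟨U, hU⟩ := exists_eq_sum_X_pow_mul_expand hp (f.num * f.denom ^ (p - 1))
  set V := f.denom.map (frobenius k p)
  have hV : expand k p V = f.denom ^ p := by
    rw [← map_expand, map_frobenius_expand]
  have hV0 : algebraMap k[X] (RatFunc k) (expand k p V) ≠ 0 := by
    rw [hV]; exact algebraMap_ne_zero (pow_ne_zero p (denom_ne_zero f))
  refine ⟨fun i => algebraMap k[X] (RatFunc k) (expand k p (U i)) /
    algebraMap k[X] (RatFunc k) (expand k p V), fun i => ?_, ?_⟩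
  · exact div_mem (algebraMap_expand_mem_powSubfield p _) (algebraMap_expand_mem_powSubfield p _)
  · conv_lhs => rw [← num_div_denom f]
    simp only [div_mul_eq_mul_div, ← Finset.sum_div]
    rw [div_eq_div_iff (algebraMap_ne_zero (denom_ne_zero f)) hV0, hV]
    have hsum : ∑ i ∈ Finset.range p, algebraMap k[X] (RatFunc k) (expand k p (U i)) * X ^ i =
        algebraMap k[X] (RatFunc k) (f.num * f.denom ^ (p - 1)) := by
      simp only [hU, map_sum, map_mul, map_pow, algebraMap_X, mul_comm]
    rw [hsum, ← map_mul, ← map_mul, mul_assoc, ← pow_succ, Nat.sub_add_cancel hp]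

def RegularAtZero (f : RatFunc k) : Prop :=
  f.denom.eval 0 ≠ 0

theorem RegularAtZero.add {f g : RatFunc k} (hf : RegularAtZero f) (hg : RegularAtZero g) :
    RegularAtZero (f + g) := fun h =>
  mul_ne_zero hf hg (by simpa using eval_eq_zero_of_dvd_of_eval_eq_zero (denom_add_dvd f g) h)

theorem RegularAtZero.mul {f g : RatFunc k} (hf : RegularAtZero f) (hg : RegularAtZero g) :
    RegularAtZero (f * g) := fun h =>
  mul_ne_zero hf hg (by simpa using eval_eq_zero_of_dvd_of_eval_eq_zero (denom_mul_dvd f g) h)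

theorem regularAtZero_algebraMap (A : k[X]) : RegularAtZero (algebraMap k[X] (RatFunc k) A) := by
  simp [RegularAtZero]

theorem regularAtZero_C (c : k) : RegularAtZero (C c) := by
  simp [RegularAtZero]

theorem regularAtZero_div {A B : k[X]} (hB : B.eval 0 ≠ 0) :
    RegularAtZero (algebraMap k[X] (RatFunc k) A / algebraMap k[X] (RatFunc k) B) ∧
      ev₀ (algebraMap k[X] (RatFunc k) A / algebraMap k[X] (RatFunc k) B) =
        A.eval 0 / B.eval 0 := by
  have hB0 : B ≠ 0 := by rintro rfl; simp at hB
  have hreg : RegularAtZero (algebraMap k[X] (RatFunc k) A / algebraMap k[X] (RatFunc k) B) :=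
    fun h => hB (eval_eq_zero_of_dvd_of_eval_eq_zero (denom_div_dvd A B) h)
  refine ⟨hreg, (eq_div_iff hB).mpr ?_⟩
  have h := eval_mul (f := RingHom.id k) (a := 0) hreg (regularAtZero_algebraMap B)
  rw [div_mul_cancel₀ _ (algebraMap_ne_zero hB0), eval_algebraMap, eval_algebraMap] at h
  exact h.symm

theorem RegularAtZero.X_mul_ratDeriv {f : RatFunc k} (hf : RegularAtZero f) :
    RegularAtZero (X * ratDeriv f) ∧ ev₀ (X * ratDeriv f) = 0 := by
  have hf2 : (f.denom ^ 2).eval 0 ≠ 0 := by rw [eval_pow]; exact pow_ne_zero 2 hf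
  have hXf : X * ratDeriv f = algebraMap k[X] (RatFunc k)
      (Polynomial.X * (derivative f.num * f.denom - f.num * derivative f.denom)) /
        algebraMap k[X] (RatFunc k) (f.denom ^ 2) := by
    rw [ratDeriv, map_mul, map_sub, map_mul, map_mul, algebraMap_X, mul_div_assoc]
  rw [hXf]
  refine ⟨(regularAtZero_div hf2).1, ?_⟩
  rw [(regularAtZero_div hf2).2]
  simp

theorem regularAtZero_sum {ι : Type*} (s : Finset ι) {F : ι → RatFunc k}
    (hF : ∀ i ∈ s, RegularAtZero (F i)) :
    RegularAtZero (∑ i ∈ s, F i) ∧ ev₀ (∑ i ∈ s, F i) = ∑ i ∈ s, ev₀ (F i) := by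
  classical
  induction s using Finset.induction with
  | empty => simp [RegularAtZero]
  | insert x s hx ih =>
    obtain ⟨hreg, heval⟩ := ih fun i hi => hF i (Finset.mem_insert_of_mem hi)
    have hFx := hF x (Finset.mem_insert_self x s)
    rw [Finset.sum_insert hx, Finset.sum_insert hx,
      RatFunc.eval_add (f := RingHom.id k) (a := 0) hFx hreg, heval]
    exact ⟨hFx.add hreg, rfl⟩

theorem regularAtZero_X_pow_mul {f : RatFunc k} {i : ℕ}
    (hf : ¬ Polynomial.X ^ (i + 1) ∣ f.denom) : RegularAtZero (X ^ i * f) := by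
  obtain ⟨b, D, hD, hDe⟩ := exists_eq_X_pow_mul_of_ne_zero (denom_ne_zero f)
  have hbi : b ≤ i := by
    by_contra! hb
    exact hf (dvd_trans (pow_dvd_pow Polynomial.X hb) ⟨D, hDe⟩)
  have hXf : X ^ i * f = algebraMap k[X] (RatFunc k) (Polynomial.X ^ (i - b) * f.num) /
      algebraMap k[X] (RatFunc k) D := by
    conv_lhs => rw [← num_div_denom f, hDe, ← Nat.sub_add_cancel hbi]
    have hX : (X : RatFunc k) ≠ 0 := X_ne_zero
    have hD0 : D ≠ 0 := by rintro rfl; simp at hD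
    have := algebraMap_ne_zero (K := k) hD0
    simp only [map_mul, map_pow, algebraMap_X, pow_add]
    field_simp
  rw [hXf]
  exact (regularAtZero_div hD).1

def IsUnitAtZero (u : RatFunc k) : Prop :=
  RegularAtZero u ∧ ev₀ u ≠ 0

theorem isUnitAtZero_one : IsUnitAtZero (1 : RatFunc k) :=
  ⟨by simp [RegularAtZero], by simp⟩

theorem IsUnitAtZero.mul {u u' : RatFunc k} (hu : IsUnitAtZero u) (hu' : IsUnitAtZero u') :
    IsUnitAtZero (u * u') :=
  ⟨hu.1.mul hu'.1, by
    rw [eval_mul (f := RingHom.id k) (a := 0) hu.1 hu'.1]; exact mul_ne_zero hu.2 hu'.2⟩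

theorem IsUnitAtZero.add_X_pow_mul {u f : RatFunc k} (hu : IsUnitAtZero u) (hf : RegularAtZero f)
    {d : ℕ} (hd : d ≠ 0) : IsUnitAtZero (u + X ^ d * f) := by
  have hXd : X ^ d = algebraMap k[X] (RatFunc k) (Polynomial.X ^ d) := by simp
  have hXd_reg : RegularAtZero (X ^ d : RatFunc k) := hXd ▸ regularAtZero_algebraMap _
  refine ⟨hu.1.add (hXd_reg.mul hf), ?_⟩
  rw [eval_add (f := RingHom.id k) (a := 0) hu.1 (hXd_reg.mul hf),
    eval_mul (f := RingHom.id k) (a := 0) hXd_reg hf, hXd, eval_algebraMap]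
  simpa [zero_pow hd] using hu.2

def HasOrdAtZero (f : RatFunc k) (v : ℤ) : Prop :=
  ∃ u, IsUnitAtZero u ∧ f = X ^ v * u

theorem exists_hasOrdAtZero {f : RatFunc k} (hf : f ≠ 0) : ∃ v, HasOrdAtZero f v := by
  obtain ⟨a, N, hN, hNe⟩ := exists_eq_X_pow_mul_of_ne_zero (num_ne_zero hf)
  obtain ⟨b, D, hD, hDe⟩ := exists_eq_X_pow_mul_of_ne_zero (denom_ne_zero f)
  have hND := regularAtZero_div (A := N) hD
  refine ⟨(a : ℤ) - b, _, ⟨hND.1, by rw [hND.2]; exact div_ne_zero hN hD⟩, ?_⟩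
  have hD0 : D ≠ 0 := by rintro rfl; simp at hD
  have := algebraMap_ne_zero (K := k) hD0
  have hX : (X : RatFunc k) ≠ 0 := X_ne_zero
  conv_lhs => rw [← num_div_denom f, hNe, hDe]
  simp only [map_mul, map_pow, algebraMap_X, zpow_sub₀ hX, zpow_natCast]
  field_simp

theorem HasOrdAtZero.mul {f g : RatFunc k} {v w : ℤ} (hf : HasOrdAtZero f v)
    (hg : HasOrdAtZero g w) : HasOrdAtZero (f * g) (v + w) := by
  obtain ⟨u, hu, rfl⟩ := hf
  obtain ⟨u', hu', rfl⟩ := hg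
  refine ⟨u * u', hu.mul hu', ?_⟩
  rw [zpow_add₀ X_ne_zero]
  ring

theorem hasOrdAtZero_X_pow (i : ℕ) : HasOrdAtZero (X ^ i : RatFunc k) i :=
  ⟨1, isUnitAtZero_one, by simp⟩

theorem HasOrdAtZero.add_of_lt {f g : RatFunc k} {v w : ℤ} (hf : HasOrdAtZero f v)
    (hg : HasOrdAtZero g w) (hvw : v < w) : HasOrdAtZero (f + g) v := by
  obtain ⟨u, hu, rfl⟩ := hf
  obtain ⟨u', hu', rfl⟩ := hg
  obtain ⟨d, hd⟩ := Int.eq_ofNat_of_zero_le (sub_nonneg.mpr hvw.le)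
  refine ⟨u + X ^ d * u', hu.add_X_pow_mul hu'.1 (by omega), ?_⟩
  rw [show w = v + d by omega, zpow_add₀ X_ne_zero, zpow_natCast]
  ring

theorem exists_hasOrdAtZero_sum {ι : Type*} {s : Finset ι} (hs : s.Nonempty)
    {F : ι → RatFunc k} {v : ι → ℤ} (hF : ∀ i ∈ s, HasOrdAtZero (F i) (v i))
    (hv : Set.InjOn v s) :
    ∃ i ∈ s, HasOrdAtZero (∑ j ∈ s, F j) (v i) := by
  induction hs using Finset.Nonempty.cons_induction with
  | singleton a => exact ⟨a, Finset.mem_singleton_self a, by simpa using hF a (by simp)⟩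
  | cons a s ha hs ih =>
    simp only [Finset.coe_cons, Finset.mem_cons, forall_eq_or_imp] at hF hv
    obtain ⟨i, hi, hsum⟩ := ih hF.2 (hv.mono (Set.subset_insert _ _))
    have hne : v a ≠ v i := fun h =>
      ha (hv (Set.mem_insert _ _) (Set.mem_insert_of_mem _ hi) h ▸ hi)
    rw [Finset.sum_cons]
    rcases hne.lt_or_gt with hlt | hgt
    · exact ⟨a, Finset.mem_cons_self a s, hF.1.add_of_lt hsum hlt⟩
    · exact ⟨i, Finset.mem_cons_of_mem hi, by rw [add_comm]; exact hsum.add_of_lt hF.1 hgt⟩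

noncomputable def diffOp (n : ℕ) (a : ℕ → RatFunc k) (y : RatFunc k) : RatFunc k :=
  ratDeriv^[n] y + ∑ i ∈ Finset.Icc 1 n, a i * ratDeriv^[n - i] y

noncomputable def indicialPoly (n : ℕ) (a : ℕ → RatFunc k) : k[X] :=
  (∏ t ∈ Finset.range n, (Polynomial.X - Polynomial.C (t : k))) +
    ∑ i ∈ Finset.Icc 1 n, Polynomial.C (ev₀ (X ^ i * a i)) *
      ∏ t ∈ Finset.range (n - i), (Polynomial.X - Polynomial.C (t : k))

theorem ratDeriv_sub_mul {c : RatFunc k} (hc : ratDeriv c = 0) (f g : RatFunc k) :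
    ratDeriv (f - c * g) = ratDeriv f - c * ratDeriv g := by
  rw [← coe_ratDerivation] at hc ⊢
  rw [map_sub, Derivation.leibniz, hc, smul_zero, add_zero, smul_eq_mul]

theorem iterate_ratDeriv_sub_mul {c : RatFunc k} (hc : ratDeriv c = 0) (j : ℕ) (f g : RatFunc k) :
    ratDeriv^[j] (f - c * g) = ratDeriv^[j] f - c * ratDeriv^[j] g := by
  induction j generalizing f g with
  | zero => rfl
  | succ j ih => simp only [Function.iterate_succ_apply, ratDeriv_sub_mul hc, ih]

theorem diffOp_sub_mul {n : ℕ} {a : ℕ → RatFunc k} {c : RatFunc k} (hc : ratDeriv c = 0)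
    (f g : RatFunc k) : diffOp n a (f - c * g) = diffOp n a f - c * diffOp n a g := by
  simp only [diffOp, iterate_ratDeriv_sub_mul hc, mul_sub, Finset.sum_sub_distrib, mul_add,
    Finset.mul_sum]
  ring_nf

theorem X_mul_ratDeriv_X_zpow (m : ℤ) :
    X * ratDeriv (X ^ m : RatFunc k) = (m : RatFunc k) * X ^ m := by
  rw [← coe_ratDerivation, Derivation.leibniz_zpow, coe_ratDerivation, ratDeriv_X, zsmul_eq_mul,
    smul_eq_mul, mul_one, mul_left_comm, ← zpow_one_add₀ RatFunc.X_ne_zero, add_sub_cancel]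

theorem exists_X_pow_mul_iterate_ratDeriv (m : ℤ) {u : RatFunc k} (hu : RegularAtZero u)
    (j : ℕ) : ∃ w, RegularAtZero w ∧
      ev₀ w = (∏ t ∈ Finset.range j, ((m : k) - t)) * ev₀ u ∧
      X ^ j * ratDeriv^[j] (X ^ m * u) = X ^ m * w := by
  induction j with
  | zero => exact ⟨u, hu, by simp, by simp⟩
  | succ j ih =>
    obtain ⟨w, hw, hw_eval, hw_eq⟩ := ih
    obtain ⟨hXw, hXw_eval⟩ := hw.X_mul_ratDeriv
    refine ⟨C ((m : k) - j) * w + X * ratDeriv w, ((regularAtZero_C _).mul hw).add hXw, ?_, ?_⟩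
    · rw [eval_add (f := RingHom.id k) (a := 0) ((regularAtZero_C _).mul hw) hXw,
        eval_mul (f := RingHom.id k) (a := 0) (regularAtZero_C _) hw, hXw_eval, eval_C, hw_eval,
        Finset.prod_range_succ]
      simp only [RingHom.id_apply]
      ring
    · have hderiv := congrArg (fun f => X * ratDeriv f) hw_eq
      simp only [ratDeriv_mul] at hderiv
      have hj := X_mul_ratDeriv_X_zpow (k := k) j
      have hm := X_mul_ratDeriv_X_zpow (k := k) m
      simp only [zpow_natCast, Int.cast_natCast] at hj
      rw [Function.iterate_succ_apply', map_sub, map_intCast, map_natCast]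
      linear_combination hderiv - ratDeriv^[j] (X ^ m * u) * hj + w * hm - j * hw_eq

theorem isRoot_indicialPoly {n : ℕ} {a : ℕ → RatFunc k}
    (ha : ∀ i ∈ Finset.Icc 1 n, RegularAtZero (X ^ i * a i)) {y : RatFunc k}
    (hy : diffOp n a y = 0) {m : ℤ} (hm : HasOrdAtZero y m) :
    (indicialPoly n a).IsRoot (m : k) := by
  obtain ⟨u, hu, rfl⟩ := hm
  choose w hw hw_eval hw_eq using exists_X_pow_mul_iterate_ratDeriv m hu.1
  have hterm : ∀ i ∈ Finset.Icc 1 n, RegularAtZero (X ^ i * a i * w (n - i)) :=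
    fun i hi => (ha i hi).mul (hw _)
  -- `z ^ n * L y = z ^ m * (w n + ∑ (zⁱ aᵢ) w (n - i))`
  have hrel : w n + ∑ i ∈ Finset.Icc 1 n, X ^ i * a i * w (n - i) = 0 := by
    refine (mul_eq_zero.mp ?_).resolve_left (zpow_ne_zero m RatFunc.X_ne_zero)
    rw [mul_add, Finset.mul_sum, ← hw_eq, ← mul_zero (X ^ n : RatFunc k), ← hy, diffOp, mul_add,
      Finset.mul_sum]
    congr 1
    refine Finset.sum_congr rfl fun i hi => ?_
    rw [← Nat.add_sub_cancel' (Finset.mem_Icc.mp hi).2, pow_add, Nat.add_sub_cancel_left]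
    linear_combination -(X ^ i * a i) * hw_eq (n - i)
  have hrel_eval := congrArg ev₀ hrel
  rw [eval_add (f := RingHom.id k) (a := 0) (hw n) (regularAtZero_sum _ hterm).1,
    (regularAtZero_sum _ hterm).2, eval_zero] at hrel_eval
  refine (mul_eq_zero.mp (Eq.trans ?_ hrel_eval)).resolve_right hu.2
  rw [hw_eval, Finset.sum_congr rfl fun i hi =>
    eval_mul (f := RingHom.id k) (a := 0) (ha i hi) (hw (n - i))]
  simp only [indicialPoly, Polynomial.eval_add, Polynomial.eval_prod, Polynomial.eval_finsetSum,
    Polynomial.eval_mul, Polynomial.eval_sub, Polynomial.eval_C, Polynomial.eval_X, hw_eval,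
    add_mul, Finset.sum_mul, mul_assoc]

theorem intCast_eq_zero_of_hasOrdAtZero {c : RatFunc k} (hc : ratDeriv c = 0) {m : ℤ}
    (hm : HasOrdAtZero c m) : (m : k) = 0 := by
  -- `c` solves the operator `d/dz`, whose indicial polynomial is `x`.
  have h := isRoot_indicialPoly (n := 1) (a := 0) (by simp [RegularAtZero])
    (by simpa [diffOp] using hc) hm
  simpa [indicialPoly] using h

theorem exists_hasOrdAtZero_sum_not_dvd {p : ℕ} [CharP k p] {s : Finset ℕ}
    (hs : ∀ i ∈ s, 0 < i ∧ i < p) {c : ℕ → RatFunc k} (hc : ∀ i, ratDeriv (c i) = 0)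
    (hsum : ∑ i ∈ s, c i * X ^ i ≠ 0) :
    ∃ w, HasOrdAtZero (∑ i ∈ s, c i * X ^ i) w ∧ ¬ (p : ℤ) ∣ w := by
  classical
  rw [← Finset.sum_filter_ne_zero] at hsum ⊢
  set t := s.filter fun i => c i * X ^ i ≠ 0
  have hts : ∀ i ∈ t, 0 < i ∧ i < p := fun i hi => hs i (Finset.mem_filter.mp hi).1
  have hord : ∀ i ∈ t, ∃ e, HasOrdAtZero (c i) e ∧ (p : ℤ) ∣ e := by
    intro i hi
    obtain ⟨e, he⟩ := exists_hasOrdAtZero (left_ne_zero_of_mul (Finset.mem_filter.mp hi).2)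
    exact ⟨e, he,
      (CharP.intCast_eq_zero_iff k p e).mp (intCast_eq_zero_of_hasOrdAtZero (hc i) he)⟩
  choose! e he hep using hord
  obtain ⟨i, hi, hi_ord⟩ := exists_hasOrdAtZero_sum (Finset.nonempty_of_sum_ne_zero hsum)
    (v := fun i => e i + i) (fun i hi => (he i hi).mul (hasOrdAtZero_X_pow i))
    fun i hi j hj hij => by
      have hdvd : (p : ℤ) ∣ i - j := by
        rw [show (i : ℤ) - j = e j - e i by simp only at hij; omega]
        exact dvd_sub (hep j hj) (hep i hi)
      have := hts i hi
      have := hts j hj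
      have := Int.eq_zero_of_abs_lt_dvd hdvd (abs_lt.mpr ⟨by omega, by omega⟩)
      omega
  refine ⟨_, hi_ord, fun hdvd => ?_⟩
  have hpi : (p : ℤ) ∣ i := (dvd_add_right (hep i hi)).mp hdvd
  have := hts i hi
  have := Int.eq_zero_of_abs_lt_dvd hpi (abs_lt.mpr ⟨by omega, by omega⟩)
  omega

theorem dvd_of_diffOp_eq_zero {p : ℕ} [CharP k p] {n : ℕ} {a : ℕ → RatFunc k}
    (ha : ∀ i ∈ Finset.Icc 1 n, RegularAtZero (X ^ i * a i))
    (hind : indicialPoly n a = Polynomial.X ^ n) {y : RatFunc k} (hy : diffOp n a y = 0) {m : ℤ}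
    (hm : HasOrdAtZero y m) : (p : ℤ) ∣ m := by
  have h := isRoot_indicialPoly ha hy hm
  rw [hind, IsRoot, eval_pow, Polynomial.eval_X] at h
  exact (CharP.intCast_eq_zero_iff k p m).mp (pow_eq_zero_iff'.mp h).1

end RatFunc

theorem stmt4_general (p : ℕ) (hp : p.Prime) (k : Type) [Field k] [CharP k p]
    (n : ℕ) (a : ℕ → RatFunc k)
    -- … and it is regular singular: `zⁱ aᵢ` has no pole at zero
    (hreg0 : ∀ i ∈ Finset.Icc 1 n, ¬ (Polynomial.X ^ (i + 1) ∣ RatFunc.denom (a i)))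
    -- all exponents of L at zero equal zero
    (hexp : (∏ t ∈ Finset.range n, (Polynomial.X - Polynomial.C ((t : k)))) +
        ∑ i ∈ Finset.Icc 1 n,
          Polynomial.C (RatFunc.eval (RingHom.id k) 0 (RatFunc.X ^ i * a i)) *
            ∏ t ∈ Finset.range (n - i), (Polynomial.X - Polynomial.C ((t : k)))
      = Polynomial.X ^ n)
    -- the space of rational solutions of L is nonzero
    (hker : ∃ P : RatFunc k, P ≠ 0 ∧
      ratDeriv^[n] P + ∑ i ∈ Finset.Icc 1 n, a i * ratDeriv^[n - i] P = 0) :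
    ∃ P : RatFunc k, P ≠ 0 ∧
      (ratDeriv^[n] P + ∑ i ∈ Finset.Icc 1 n, a i * ratDeriv^[n - i] P = 0) ∧
      ∀ Q : RatFunc k,
        (ratDeriv^[n] Q + ∑ i ∈ Finset.Icc 1 n, a i * ratDeriv^[n - i] Q = 0) →
        ∃ c ∈ Subfield.closure
            (Set.range (RatFunc.C : k →+* RatFunc k) ∪ {RatFunc.X ^ p}),
          Q = c * P := by
  have : ExpChar k p := ExpChar.prime hp
  have hord {y : RatFunc k} {m : ℤ} (hy : RatFunc.diffOp n a y = 0)
      (hm : RatFunc.HasOrdAtZero y m) : (p : ℤ) ∣ m :=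
    RatFunc.dvd_of_diffOp_eq_zero (fun i hi => RatFunc.regularAtZero_X_pow_mul (hreg0 i hi)) hexp
      hy hm
  obtain ⟨P, hP0, hP⟩ := hker
  refine ⟨P, hP0, hP, fun Q hQ => ?_⟩
  obtain ⟨c, hcK, hc⟩ := RatFunc.exists_eq_sum_mul_X_pow p (Q / P)
  have hc' i := RatFunc.ratDeriv_eq_zero_of_mem_powSubfield (hcK i)
  rw [← Finset.add_sum_erase _ _ (Finset.mem_range.mpr hp.pos), pow_zero, mul_one,
    div_eq_iff hP0] at hc
  set g := ∑ i ∈ (Finset.range p).erase 0, c i * RatFunc.X ^ i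
  by_cases hg : g = 0
  · exact ⟨c 0, hcK 0, by rwa [hg, add_zero] at hc⟩
  obtain ⟨w, hw, hwp⟩ := RatFunc.exists_hasOrdAtZero_sum_not_dvd
    (fun i hi => ⟨Nat.pos_of_ne_zero (Finset.ne_of_mem_erase hi),
      Finset.mem_range.mp (Finset.mem_of_mem_erase hi)⟩) hc' hg
  obtain ⟨v, hv⟩ := RatFunc.exists_hasOrdAtZero hP0
  have hsol : RatFunc.diffOp n a (Q - c 0 * P) = 0 := by
    rw [RatFunc.diffOp_sub_mul (hc' 0), RatFunc.diffOp, RatFunc.diffOp, hP, hQ, mul_zero, sub_zero]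
  have hgP : Q - c 0 * P = g * P := by rw [hc]; ring
  exact absurd ((dvd_add_left (hord hP hv)).mp (hord hsol (hgP ▸ hw.mul hv))) hwp

/-- Let `k` be a finite field of characteristic `p` and let
`L = (d/dz)^n + a 1 (d/dz)^{n-1} + ⋯ + a n` be a monic fuchsian differential operator with
coefficients in `k(z)` such that zero is a regular singular point of `L` and all exponents
of `L` at zero are zero (the indicial polynomial at zero,
`x(x−1)⋯(x−n+1) + ∑_{i=1}^{n} (zⁱ aᵢ)(0) · x(x−1)⋯(x−n+i+1)`, equals `xⁿ`).
If `L` has a nonzero rational solution, then the space of rational solutions of `L` is a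
`k(z^p)`-vector space of dimension exactly `1`: it has a nonzero element `P` such that every
solution is a `k(z^p)`-multiple of `P`, where `k(z^p)` is the subfield of `k(z)` generated by
the constants and `z^p`. -/
theorem stmt4 (p : ℕ) (hp : p.Prime) (k : Type) [Field k] [Fintype k] [CharP k p]
    (n : ℕ) (hn : 1 ≤ n) (a : ℕ → RatFunc k)
    -- infinity is a regular singular point
    (hinfty : ∀ i ∈ Finset.Icc 1 n,
      (RatFunc.num (a i)).degree + (i : WithBot ℕ) ≤ (RatFunc.denom (a i)).degree)
    -- every finite singular point (in the algebraic closure) is regular singular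
    (hreg : ∀ α : AlgebraicClosure k,
      (∃ i ∈ Finset.Icc 1 n,
        Polynomial.eval α ((RatFunc.denom (a i)).map (algebraMap k (AlgebraicClosure k))) = 0) →
      ∀ i ∈ Finset.Icc 1 n,
        ¬ ((Polynomial.X - Polynomial.C α) ^ (i + 1) ∣
            (RatFunc.denom (a i)).map (algebraMap k (AlgebraicClosure k))))
    -- zero is a singular point of L …
    (hsing0 : ∃ i ∈ Finset.Icc 1 n, Polynomial.eval 0 (RatFunc.denom (a i)) = 0)
    -- … and it is regular singular: `zⁱ aᵢ` has no pole at zero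
    (hreg0 : ∀ i ∈ Finset.Icc 1 n, ¬ (Polynomial.X ^ (i + 1) ∣ RatFunc.denom (a i)))
    -- all exponents of L at zero equal zero
    (hexp : (∏ t ∈ Finset.range n, (Polynomial.X - Polynomial.C ((t : k)))) +
        ∑ i ∈ Finset.Icc 1 n,
          Polynomial.C (RatFunc.eval (RingHom.id k) 0 (RatFunc.X ^ i * a i)) *
            ∏ t ∈ Finset.range (n - i), (Polynomial.X - Polynomial.C ((t : k)))
      = Polynomial.X ^ n)
    -- the space of rational solutions of L is nonzero
    (hker : ∃ P : RatFunc k, P ≠ 0 ∧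
      ratDeriv^[n] P + ∑ i ∈ Finset.Icc 1 n, a i * ratDeriv^[n - i] P = 0) :
    ∃ P : RatFunc k, P ≠ 0 ∧
      (ratDeriv^[n] P + ∑ i ∈ Finset.Icc 1 n, a i * ratDeriv^[n - i] P = 0) ∧
      ∀ Q : RatFunc k,
        (ratDeriv^[n] Q + ∑ i ∈ Finset.Icc 1 n, a i * ratDeriv^[n - i] Q = 0) →
        ∃ c ∈ Subfield.closure
            (Set.range (RatFunc.C : k →+* RatFunc k) ∪ {RatFunc.X ^ p}),
          Q = c * P :=
  stmt4_general p hp k n a hreg0 hexp hker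
end

section
/- For every odd prime p and every integer j ≥ 0, the following congruence between integers holds: C(2jp, jp) · ( Σ_{k=0}^{2jp} (−1)^k · C(2jp, k)^4 ) ≡ C(2j, j) · ( Σ_{k=0}^{2j} (−1)^k · C(2j, k)^4 ) (mod p). -/
/-!
By Lucas's theorem, modulo a prime `p` the coefficient `C(p n, k)` vanishes unless `p ∣ k`, and
`C(p n, p q) ≡ C(n, q)`. So only the terms `k = p q` survive in the sum over `k ≤ p n`, and since
`x ^ p = x` in `ZMod p` they reproduce the sum over `q ≤ n` term by term.
-/

open Finset

theorem Finset.sum_range_mul_add_one_of_not_dvd {M : Type*} [AddCommMonoid M] {p : ℕ}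
    (hp : p ≠ 0) (n : ℕ) (f : ℕ → M) (hf : ∀ k, ¬p ∣ k → f k = 0) :
    ∑ k ∈ range (p * n + 1), f k = ∑ q ∈ range (n + 1), f (p * q) := by
  rw [← sum_image fun a _ b _ h => Nat.eq_of_mul_eq_mul_left (Nat.pos_of_ne_zero hp) h]
  refine (sum_subset ?_ fun k hk hk' => hf k ?_).symm
  · simp only [subset_iff, mem_image, mem_range, Nat.lt_succ_iff]
    rintro _ ⟨q, hq, rfl⟩
    gcongr
  · rintro ⟨q, rfl⟩
    simp only [mem_image, mem_range, Nat.lt_succ_iff, not_exists, not_and] at hk hk'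
    exact hk' q (Nat.le_of_mul_le_mul_left hk (Nat.pos_of_ne_zero hp)) rfl

namespace ZMod

variable {p : ℕ} [Fact p.Prime]

theorem natCast_choose_mul_mul (a b : ℕ) :
    (Nat.choose (p * a) (p * b) : ZMod p) = Nat.choose a b := by
  exact_mod_cast (ZMod.intCast_eq_intCast_iff _ _ _).2 Choose.choose_mul_mul_modEq_choose

theorem natCast_choose_mul_of_not_dvd (n : ℕ) {k : ℕ} (hk : ¬p ∣ k) :
    (Nat.choose (p * n) k : ZMod p) = 0 := by
  have h := (ZMod.intCast_eq_intCast_iff _ _ _).2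
    (Choose.choose_modEq_choose_mod_mul_choose_div (n := p * n) (k := k) (p := p))
  push_cast at h
  rw [h, Nat.mul_mod_right,
    Nat.choose_eq_zero_of_lt (Nat.pos_of_ne_zero (mt Nat.dvd_of_mod_eq_zero hk))]
  simp

theorem sum_range_pow_mul_choose_mul_pow (x : ZMod p) (n : ℕ) {m : ℕ} (hm : m ≠ 0) :
    ∑ k ∈ range (p * n + 1), x ^ k * (Nat.choose (p * n) k : ZMod p) ^ m =
      ∑ k ∈ range (n + 1), x ^ k * (Nat.choose n k : ZMod p) ^ m := by
  rw [sum_range_mul_add_one_of_not_dvd (Fact.out : p.Prime).ne_zero n _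
    fun k hk => by rw [natCast_choose_mul_of_not_dvd n hk, zero_pow hm, mul_zero]]
  simp only [pow_mul, pow_card, natCast_choose_mul_mul]

end ZMod

theorem stmt6_general (p : ℕ) (hp : p.Prime) (j : ℕ) :
    (Nat.choose (2 * j * p) (j * p) : ℤ) *
        (∑ k ∈ Finset.range (2 * j * p + 1), (-1 : ℤ) ^ k * (Nat.choose (2 * j * p) k : ℤ) ^ 4) ≡
      (Nat.choose (2 * j) j : ℤ) *
        (∑ k ∈ Finset.range (2 * j + 1), (-1 : ℤ) ^ k * (Nat.choose (2 * j) k : ℤ) ^ 4)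
      [ZMOD (p : ℤ)] := by
  have : Fact p.Prime := ⟨hp⟩
  rw [← ZMod.intCast_eq_intCast_iff]
  push_cast
  rw [mul_comm _ p, mul_comm j p, ZMod.natCast_choose_mul_mul,
    ZMod.sum_range_pow_mul_choose_mul_pow _ _ four_ne_zero]

/-- For every odd prime `p` and every integer `j ≥ 0`,
`C(2jp, jp) * (∑_{k=0}^{2jp} (−1)^k C(2jp, k)^4) ≡ C(2j, j) * (∑_{k=0}^{2j} (−1)^k C(2j, k)^4)
(mod p)`. -/
theorem stmt6 (p : ℕ) (hp : p.Prime) (hodd : Odd p) (j : ℕ) :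
    (Nat.choose (2 * j * p) (j * p) : ℤ) *
        (∑ k ∈ Finset.range (2 * j * p + 1), (-1 : ℤ) ^ k * (Nat.choose (2 * j * p) k : ℤ) ^ 4) ≡
      (Nat.choose (2 * j) j : ℤ) *
        (∑ k ∈ Finset.range (2 * j + 1), (-1 : ℤ) ^ k * (Nat.choose (2 * j) k : ℤ) ^ 4)
      [ZMOD (p : ℤ)] :=
  stmt6_general p hp j
end

section
/- In ℚ[[z]], the series f_1(z) = Σ_{n≥0} C(2n,n)^2·z^n and f_2(z) = Σ_{n≥0} (−1/(2n−1))·C(2n,n)^2·z^n satisfy the two identities f_1(z) = f_2(z) − 2z·f_2′(z) and f_2(z) = (1 − 16z)·( f_1(z) + 2z·f_1′(z) ), where f′ denotes the formal derivative of the power series f. -/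
/-!
The operator `X · d/dX` multiplies the `n`-th coefficient by `n`, so the first identity is
`(1 - 2n) · (-c_n / (2n - 1)) = c_n` coefficientwise, with `c_n = C(2n,n)²`. Comparing the
coefficients of `z^(n+1)` in the second identity gives
`-c_{n+1} / (2n + 1) = (2n + 3) c_{n+1} - 16 (2n + 1) c_n`, which follows from
`(n + 1) C(2n+2,n+1) = 2 (2n + 1) C(2n,n)`.
-/

open PowerSeries

namespace PowerSeries

section CommSemiring

variable {R : Type*} [CommSemiring R]

set_option linter.deprecated false in
theorem derivativeFun_eq_derivative (f : R⟦X⟧) : f.derivativeFun = d⁄dX R f := rfl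

theorem coeff_ofNat_mul (k : ℕ) [k.AtLeastTwo] (g : R⟦X⟧) (n : ℕ) :
    coeff n (OfNat.ofNat k * g) = OfNat.ofNat k * coeff n g := by
  rw [← map_ofNat C, coeff_C_mul]

theorem coeff_X_mul_derivative (f : R⟦X⟧) (n : ℕ) :
    coeff n (X * d⁄dX R f) = n * coeff n f := by
  cases n with
  | zero => simp
  | succ n => rw [coeff_succ_X_mul, coeff_derivative, mul_comm, Nat.cast_succ]

theorem coeff_add_two_mul_X_mul_derivative (f : R⟦X⟧) (n : ℕ) :
    coeff n (f + 2 * X * d⁄dX R f) = (1 + 2 * n) * coeff n f := by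
  rw [map_add, mul_assoc, coeff_ofNat_mul, coeff_X_mul_derivative]
  ring

end CommSemiring

section CommRing

variable {R : Type*} [CommRing R]

theorem coeff_sub_two_mul_X_mul_derivative (f : R⟦X⟧) (n : ℕ) :
    coeff n (f - 2 * X * d⁄dX R f) = (1 - 2 * n) * coeff n f := by
  rw [map_sub, mul_assoc, coeff_ofNat_mul, coeff_X_mul_derivative]
  ring

theorem coeff_succ_one_sub_ofNat_mul_X_mul (k : ℕ) [k.AtLeastTwo] (g : R⟦X⟧) (n : ℕ) :
    coeff (n + 1) ((1 - OfNat.ofNat k * X) * g)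
      = coeff (n + 1) g - OfNat.ofNat k * coeff n g := by
  rw [sub_mul, one_mul, mul_assoc, map_sub, coeff_ofNat_mul, coeff_succ_X_mul]

end CommRing

end PowerSeries

theorem two_mul_natCast_sub_one_ne_zero {R : Type*} [Ring R] [CharZero R] (n : ℕ) :
    2 * (n : R) - 1 ≠ 0 := by
  rw [sub_ne_zero]
  exact_mod_cast (by omega : 2 * n ≠ 1)

theorem neg_sq_centralBinom_succ_div {K : Type*} [Field K] [CharZero K] (n : ℕ) :
    -(Nat.centralBinom (n + 1) : K) ^ 2 / (2 * n + 1)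
      = (2 * n + 3) * (Nat.centralBinom (n + 1) : K) ^ 2
        - 16 * (2 * n + 1) * (Nat.centralBinom n : K) ^ 2 := by
  have hrec : ((n : K) + 1) * Nat.centralBinom (n + 1) = 2 * (2 * n + 1) * Nat.centralBinom n := by
    exact_mod_cast Nat.succ_mul_centralBinom_succ n
  have hodd : (2 * n + 1 : K) ≠ 0 := by exact_mod_cast (by omega : 2 * n + 1 ≠ 0)
  field_simp
  linear_combination
    -4 * ((n + 1) * Nat.centralBinom (n + 1) + 2 * (2 * n + 1) * Nat.centralBinom n) * hrec

/-- In `ℚ[[z]]`, with `f₁(z) = ∑ C(2n,n)² zⁿ` and `f₂(z) = ∑ (−1/(2n−1)) C(2n,n)² zⁿ`,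
one has `f₁ = f₂ − 2z f₂′` and `f₂ = (1 − 16z) (f₁ + 2z f₁′)`. -/
theorem stmt9
    (f₁ f₂ : PowerSeries ℚ)
    (hf₁ : f₁ = PowerSeries.mk fun n => ((Nat.choose (2 * n) n : ℚ)) ^ 2)
    (hf₂ : f₂ = PowerSeries.mk fun n =>
      ((-1 : ℚ) / (2 * (n : ℚ) - 1)) * (Nat.choose (2 * n) n : ℚ) ^ 2) :
    f₁ = f₂ - 2 * PowerSeries.X * f₂.derivativeFun ∧
      f₂ = (1 - 16 * PowerSeries.X) * (f₁ + 2 * PowerSeries.X * f₁.derivativeFun) := by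
  simp only [derivativeFun_eq_derivative, ← Nat.centralBinom_eq_two_mul_choose] at hf₁ hf₂ ⊢
  subst hf₁ hf₂
  constructor
  · ext n
    rw [coeff_sub_two_mul_X_mul_derivative, coeff_mk, coeff_mk]
    have hden := two_mul_natCast_sub_one_ne_zero (R := ℚ) n
    field_simp
    ring
  · ext n
    cases n with
    | zero => simp
    | succ n =>
      rw [coeff_succ_one_sub_ofNat_mul_X_mul, coeff_add_two_mul_X_mul_derivative,
        coeff_add_two_mul_X_mul_derivative, coeff_mk, coeff_mk, coeff_mk]
      push_cast
      linear_combination neg_sq_centralBinom_succ_div (K := ℚ) n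
end

section
/- For every prime p, the polynomial P_{2,p}(z) ∈ 𝔽_p[z] is separable (squarefree) over the algebraic closure of 𝔽_p; in particular P_{2,p} and its derivative P_{2,p}′ have no common root. -/
/-!
The coefficients `aₙ` of `f₂` satisfy `(n + 1)² aₙ₊₁ = (16n² − 4) aₙ`, i.e. `f₂` is annihilated by
`f ↦ (1 − 16z)(z f′)′ + 4f`. Modulo `p` the truncation in degrees `< p` still satisfies the
recurrence, because the factor `(n + 1)²` vanishes at `n + 1 = p`; so `P_{2,p}` solves the same
equation. If `α` were a root of `P_{2,p}` of multiplicity `m ≥ 2`, then `m ≤ deg P_{2,p} < p`, so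
each derivative lowers the order at `α` by exactly one, and `α ≠ 0` since `P_{2,p}(0) = 1`; hence
`(z P′)′` vanishes to order exactly `m − 2` at `α`, and `(1 − 16z)(z P′)′` to order at most `m − 1`,
while `4P_{2,p}` vanishes to order `m` (note `4 ≠ 0` as `p > m ≥ 2`).
-/

open Polynomial

theorem CharP.natCast_ne_zero_of_lt {R : Type*} [AddMonoidWithOne R] (p : ℕ) [CharP R p] {n : ℕ}
    (hn : 0 < n) (hnp : n < p) : (n : R) ≠ 0 := by
  rw [Ne, CharP.cast_eq_zero_iff R p]
  exact Nat.not_dvd_of_pos_of_lt hn hnp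

theorem coeff_recurrence_of_eq_choose_sq {a : ℕ → ℤ}
    (ha : ∀ n : ℕ, (a n : ℚ) = ((-1 : ℚ) / (2 * (n : ℚ) - 1)) * (Nat.choose (2 * n) n : ℚ) ^ 2)
    (n : ℕ) : ((n : ℤ) + 1) ^ 2 * a (n + 1) = (16 * (n : ℤ) ^ 2 - 4) * a n := by
  have hbinom : ((n : ℚ) + 1) * (Nat.choose (2 * (n + 1)) (n + 1) : ℚ)
      = 2 * (2 * (n : ℚ) + 1) * (Nat.choose (2 * n) n : ℚ) := by
    exact_mod_cast Nat.succ_mul_centralBinom_succ n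
  have h1 : (2 * (n : ℚ) + 1) ≠ 0 := by positivity
  have h2 : (2 * (n : ℚ) - 1) ≠ 0 := by
    intro h
    have : (2 * n : ℚ) = 1 := by linarith
    norm_cast at this
    omega
  qify
  calc ((n : ℚ) + 1) ^ 2 * a (n + 1)
      = -(((n : ℚ) + 1) * (Nat.choose (2 * (n + 1)) (n + 1) : ℚ)) ^ 2 / (2 * (n : ℚ) + 1) := by
        rw [ha]; push_cast; ring
    _ = -4 * (2 * (n : ℚ) + 1) * (Nat.choose (2 * n) n : ℚ) ^ 2 := by
        rw [hbinom]; field_simp; ring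
    _ = (16 * (n : ℚ) ^ 2 - 4) * a n := by
        rw [ha]; field_simp; ring

theorem Polynomial.coeff_sum_range_C_mul_X_pow {R : Type*} [Semiring R] (b : ℕ → R) (N n : ℕ) :
    (∑ i ∈ Finset.range N, C (b i) * X ^ i).coeff n = if n < N then b n else 0 := by
  simp

theorem Polynomial.coeff_X_mul_derivative {R : Type*} [CommSemiring R] (P : R[X]) (n : ℕ) :
    (X * derivative P).coeff n = n * P.coeff n := by
  rcases n with _ | n
  · simp
  · rw [coeff_X_mul, coeff_derivative]; push_cast; ring

theorem Polynomial.ode_of_coeff_recurrence {R : Type*} [CommRing R] {P : R[X]}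
    (h : ∀ n : ℕ, ((n : R) + 1) ^ 2 * P.coeff (n + 1) = (16 * (n : R) ^ 2 - 4) * P.coeff n) :
    (1 - 16 * X) * derivative (X * derivative P) + 4 * P = 0 := by
  ext n
  have hX : (X * derivative (X * derivative P)).coeff n = n * (n * P.coeff n) := by
    rw [coeff_X_mul_derivative, coeff_X_mul_derivative]
  simp only [sub_mul, one_mul, mul_assoc, coeff_add, coeff_sub, coeff_ofNat_mul, hX,
    coeff_derivative, coeff_X_mul_derivative, coeff_zero]
  push_cast
  linear_combination h n

theorem truncation_coeff_recurrence {R : Type*} [CommRing R] (p : ℕ) [CharP R p] {a : ℕ → ℤ}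
    (ha : ∀ n : ℕ, ((n : ℤ) + 1) ^ 2 * a (n + 1) = (16 * (n : ℤ) ^ 2 - 4) * a n) {P : R[X]}
    (hP : ∀ n, P.coeff n = if n < p then (a n : R) else 0) (n : ℕ) :
    ((n : R) + 1) ^ 2 * P.coeff (n + 1) = (16 * (n : R) ^ 2 - 4) * P.coeff n := by
  have hcast : ((n : R) + 1) ^ 2 * a (n + 1) = (16 * (n : R) ^ 2 - 4) * a n := by
    exact_mod_cast congrArg (Int.cast : ℤ → R) (ha n)
  rw [hP, hP]
  rcases lt_trichotomy (n + 1) p with hlt | heq | hgt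
  · rw [if_pos hlt, if_pos (by omega), hcast]
  · have hp : ((n : R) + 1) = 0 := by exact_mod_cast heq ▸ CharP.cast_eq_zero R p
    rw [if_neg heq.not_lt, if_pos (by omega), ← hcast, hp]
    ring
  · rw [if_neg (by omega), if_neg (by omega), mul_zero, mul_zero]

theorem Polynomial.rootMultiplicity_le_natDegree {R : Type*} [CommRing R] [IsDomain R] (P : R[X])
    (a : R) : P.rootMultiplicity a ≤ P.natDegree := by
  classical
  rw [← count_roots]
  exact (Multiset.count_le_card _ _).trans (card_roots' P)

theorem Polynomial.rootMultiplicity_derivative_X_mul_derivative {K : Type*} [Field K] (p : ℕ)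
    [CharP K p] {P : K[X]} {α : K} (hα : α ≠ 0) (hm : 2 ≤ P.rootMultiplicity α)
    (hmp : P.rootMultiplicity α < p) :
    (derivative (X * derivative P)).rootMultiplicity α = P.rootMultiplicity α - 2 := by
  set m := P.rootMultiplicity α
  have hP' : (derivative P).rootMultiplicity α = m - 1 :=
    derivative_rootMultiplicity_of_root_of_mem_nonZeroDivisors
      (rootMultiplicity_pos'.mp (by omega)).2
      (mem_nonZeroDivisors_of_ne_zero (CharP.natCast_ne_zero_of_lt p (by omega) hmp))
  have hXP' : (X * derivative P).rootMultiplicity α = m - 1 := by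
    have hne : derivative P ≠ 0 := by
      rintro h
      rw [h, rootMultiplicity_zero] at hP'
      omega
    rw [rootMultiplicity_mul (mul_ne_zero X_ne_zero hne), hP',
      rootMultiplicity_eq_zero (by simpa using hα), zero_add]
  rw [derivative_rootMultiplicity_of_root_of_mem_nonZeroDivisors
    (rootMultiplicity_pos'.mp (by omega)).2, hXP']
  · omega
  · rw [hXP']
    exact mem_nonZeroDivisors_of_ne_zero (CharP.natCast_ne_zero_of_lt p (by omega) (by omega))

theorem Polynomial.rootMultiplicity_le_one_of_ode {K : Type*} [Field K] (p : ℕ) [CharP K p]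
    {L P : K[X]} (hL : L.natDegree ≤ 1) (h0 : P.coeff 0 ≠ 0) (hdeg : P.natDegree < p)
    (hode : L * derivative (X * derivative P) + 4 * P = 0) (α : K) :
    P.rootMultiplicity α ≤ 1 := by
  have hP : P ≠ 0 := fun h => h0 (by simp [h])
  by_contra! hm
  have hmp : P.rootMultiplicity α < p := (rootMultiplicity_le_natDegree P α).trans_lt hdeg
  have hα : α ≠ 0 := by
    rintro rfl
    exact h0 (by simpa [coeff_zero_eq_eval_zero] using (rootMultiplicity_pos hP).mp (by omega))
  have hLD : L * derivative (X * derivative P) = -(4 * P) := eq_neg_of_add_eq_zero_left hode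
  have h4 : (4 : K[X]) ≠ 0 := by
    have h2 : (2 : K) ≠ 0 := by
      exact_mod_cast CharP.natCast_ne_zero_of_lt (R := K) p two_pos (by omega)
    rw [← map_ofNat C 4, Ne, C_eq_zero, show (4 : K) = 2 ^ 2 by norm_num]
    exact pow_ne_zero 2 h2
  have hLD0 : L * derivative (X * derivative P) ≠ 0 := by
    rw [hLD]
    exact neg_ne_zero.mpr (mul_ne_zero h4 hP)
  have hdvd : P.rootMultiplicity α ≤ (L * derivative (X * derivative P)).rootMultiplicity α := by
    rw [le_rootMultiplicity_iff hLD0, hLD]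
    exact dvd_neg.mpr (dvd_mul_of_dvd_right (pow_rootMultiplicity_dvd P α) 4)
  have hLα := (rootMultiplicity_le_natDegree L α).trans hL
  rw [rootMultiplicity_mul hLD0, rootMultiplicity_derivative_X_mul_derivative p hα hm hmp] at hdvd
  omega

theorem Polynomial.separable_of_ode {F : Type*} [Field F] (p : ℕ) [CharP F p] {L P : F[X]}
    (hL : L.natDegree ≤ 1) (h0 : P.coeff 0 ≠ 0) (hdeg : P.natDegree < p)
    (hode : L * derivative (X * derivative P) + 4 * P = 0) : P.Separable := by
  classical
  let K := AlgebraicClosure F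
  have hP : P ≠ 0 := fun h => h0 (by simp [h])
  rw [← nodup_aroots_iff_of_splits (K := K) hP (IsAlgClosed.splits _),
    Multiset.nodup_iff_count_le_one]
  intro α
  rw [count_roots]
  refine rootMultiplicity_le_one_of_ode p (L := L.map (algebraMap F K))
    (natDegree_map_le.trans hL) ?_ ?_ ?_ α
  · simpa [coeff_map] using h0
  · rwa [natDegree_map]
  · simpa [derivative_map] using congrArg (map (algebraMap F K)) hode

/-- For every prime `p`, the truncation `P_{2,p}` of `f₂|_p` in degrees `< p` is squarefree
(separable) over the algebraic closure of `𝔽_p`; in particular `P_{2,p}` and its derivative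
have no common root there. -/
theorem stmt12 (p : ℕ) [hp : Fact p.Prime]
    (a : ℕ → ℤ)
    (ha : ∀ n : ℕ, (a n : ℚ) =
      ((-1 : ℚ) / (2 * (n : ℚ) - 1)) * (Nat.choose (2 * n) n : ℚ) ^ 2)
    (P₂p : Polynomial (ZMod p))
    (hP₂p : P₂p = ∑ n ∈ Finset.range p, Polynomial.C ((a n : ZMod p)) * Polynomial.X ^ n) :
    Squarefree (P₂p.map (algebraMap (ZMod p) (AlgebraicClosure (ZMod p)))) ∧
      ∀ x : AlgebraicClosure (ZMod p),
        ¬ ((Polynomial.aeval x) P₂p = 0 ∧ (Polynomial.aeval x) (Polynomial.derivative P₂p) = 0) := by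
  have hcoeff : ∀ n, P₂p.coeff n = if n < p then (a n : ZMod p) else 0 :=
    hP₂p ▸ coeff_sum_range_C_mul_X_pow _ p
  have ha0 : a 0 = 1 := by exact_mod_cast (ha 0).trans (by norm_num : _ = (1 : ℚ))
  have h0 : P₂p.coeff 0 ≠ 0 := by simp [hcoeff, hp.out.pos, ha0]
  have hdeg : P₂p.natDegree < p := by
    rw [natDegree_lt_iff_degree_lt fun h => h0 (by simp [h]), degree_lt_iff_coeff_zero]
    intro n hn
    rw [hcoeff, if_neg hn.not_gt]
  have hode := ode_of_coeff_recurrence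
    (truncation_coeff_recurrence p (coeff_recurrence_of_eq_choose_sq ha) hcoeff)
  have hsep : P₂p.Separable := separable_of_ode p (by compute_degree!) h0 hdeg hode
  exact ⟨((separable_map _).mpr hsep).squarefree,
    fun x ⟨hx, hx'⟩ => hsep.aeval_derivative_ne_zero hx hx'⟩
end

section
/- For every prime p ≥ 3, the polynomials P_{1,p}(z) and P_{2,p}(z) are coprime in 𝔽_p[z]. -/
/-!
Modulo `p` the truncation `F = P₂` still satisfies the hypergeometric equation
`(1 - 16z) (z F')' = -4 F`: the one coefficient where truncating could break it carries the
factor `p²`. Moreover `P₁ = F - 2z F'`. At a common root `α` of `P₁` and `P₂` in an algebraic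
closure, `α ≠ 0` because `F(0) = 1`, hence `F'(α) = 0`. If `α` is a root of `F` of multiplicity
`m`, then `m ≤ deg F < p`, so each differentiation lowers the multiplicity by exactly one:
`z F'` vanishes to order `m - 1 ≥ 1` at `α` and `(z F')'` to order `m - 2`. The left side of
the equation then vanishes to order at most `m - 1`, the right side to order `m`.
-/

open Polynomial

namespace Polynomial

variable {R : Type*}

theorem coeff_sum_range_C_mul_X_pow_s13 [Semiring R] (f : ℕ → R) (N k : ℕ) :
    (∑ n ∈ Finset.range N, C (f n) * X ^ n).coeff k = if k < N then f k else 0 := by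
  simp

theorem coeff_X_mul_derivative_s13 [Semiring R] (f : R[X]) (n : ℕ) :
    (X * derivative f).coeff n = f.coeff n * n := by
  rcases n with _ | n
  · simp
  · rw [coeff_X_mul, coeff_derivative]
    push_cast
    rfl

theorem rootMultiplicity_le_natDegree_s13 [CommRing R] [IsDomain R] (f : R[X]) (a : R) :
    f.rootMultiplicity a ≤ f.natDegree := by
  classical
  exact count_roots (a := a) f ▸ (Multiset.count_le_card a f.roots).trans (card_roots' f)

theorem natDegree_lt_of_coeff_eq_ite [Semiring R] {F : R[X]} {N : ℕ} {b : ℕ → R} (hN : 0 < N)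
    (hF : ∀ k, F.coeff k = if k < N then b k else 0) : F.natDegree < N := by
  have : F.natDegree ≤ N - 1 :=
    natDegree_le_iff_coeff_eq_zero.2 fun k hk => by rw [hF, if_neg (by omega)]
  omega

theorem hypergeometric_ode_of_coeff_eq_ite [CommRing R] {N : ℕ} (hN : (N : R) = 0) {b : ℕ → R}
    (hb : ∀ n : ℕ, ((n : R) + 1) ^ 2 * b (n + 1) = (16 * (n : R) ^ 2 - 4) * b n)
    {F : R[X]} (hF : ∀ k, F.coeff k = if k < N then b k else 0) :
    (1 - C 16 * X) * derivative (X * derivative F) = C (-4) * F := by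
  have hsplit : ∀ g : R[X], (1 - C 16 * X) * g = g - C 16 * (X * g) := fun g => by ring
  ext n
  rw [hsplit, coeff_sub, coeff_C_mul, coeff_derivative, coeff_X_mul_derivative_s13,
    coeff_X_mul_derivative_s13, coeff_C_mul, coeff_X_mul_derivative_s13, hF, hF]
  push_cast
  rcases lt_trichotomy (n + 1) N with h | h | h
  · rw [if_pos h, if_pos (by omega)]
    linear_combination hb n
  · have hN' : (n : R) + 1 = 0 := by exact_mod_cast h ▸ hN
    rw [if_neg (by omega), if_pos (by omega)]
    linear_combination hb n - ((n : R) + 1) * b (n + 1) * hN'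
  · rw [if_neg (by omega), if_neg (by omega)]
    ring

variable {K : Type*} [Field K] {p : ℕ}

theorem not_isRoot_derivative_of_ode [CharP K p] {F A : K[X]} {d α : K} (hF : F ≠ 0)
    (hdeg : F.natDegree < p) (hA : A.natDegree ≤ 1) (hd : d ≠ 0)
    (hode : A * derivative (X * derivative F) = C d * F) (hα : α ≠ 0) (hroot : F.IsRoot α) :
    ¬ (derivative F).IsRoot α := by
  intro hroot'
  have hcast : ∀ j, 0 < j → j < p → (j : K) ∈ nonZeroDivisors K := fun j hj hjp =>
    mem_nonZeroDivisors_of_ne_zero fun h =>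
      absurd (Nat.le_of_dvd hj ((CharP.cast_eq_zero_iff K p j).1 h)) (by omega)
  have hprod : A * derivative (X * derivative F) ≠ 0 := by
    rw [hode]
    exact mul_ne_zero (C_ne_zero.2 hd) hF
  have hQ : X * derivative F ≠ 0 := by
    intro h
    rw [h, derivative_zero, mul_zero] at hprod
    exact hprod rfl
  set m := F.rootMultiplicity α
  have hm : m < p := (rootMultiplicity_le_natDegree_s13 F α).trans_lt hdeg
  have hmF' : (derivative F).rootMultiplicity α = m - 1 :=
    derivative_rootMultiplicity_of_root_of_mem_nonZeroDivisors hroot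
      (hcast m ((rootMultiplicity_pos hF).2 hroot) hm)
  have hmQ : (X * derivative F).rootMultiplicity α = m - 1 := by
    rw [rootMultiplicity_mul hQ, rootMultiplicity_eq_zero (by simpa using hα), hmF', zero_add]
  have hm2 : 0 < m - 1 := hmQ ▸ (rootMultiplicity_pos hQ).2 (by simp [hroot'.eq_zero])
  have hmQ' : (derivative (X * derivative F)).rootMultiplicity α = m - 2 := by
    rw [derivative_rootMultiplicity_of_root_of_mem_nonZeroDivisors
      ((rootMultiplicity_pos hQ).1 (hmQ ▸ hm2)) (hmQ ▸ hcast (m - 1) hm2 (by omega)), hmQ]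
    omega
  have hmult := congrArg (rootMultiplicity α) hode
  rw [rootMultiplicity_mul hprod, rootMultiplicity_mul (hode ▸ hprod), rootMultiplicity_C,
    hmQ'] at hmult
  have hmA := (rootMultiplicity_le_natDegree_s13 A α).trans hA
  omega

theorem isCoprime_sub_C_mul_X_mul_derivative_of_ode [CharP K p] {F A : K[X]} {d e : K}
    (h0 : F.coeff 0 ≠ 0) (hdeg : F.natDegree < p) (hA : A.natDegree ≤ 1) (hd : d ≠ 0)
    (he : e ≠ 0) (hode : A * derivative (X * derivative F) = C d * F) :
    IsCoprime F (F - C e * (X * derivative F)) := by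
  rw [isCoprime_iff_aeval_ne_zero_of_isAlgClosed K (AlgebraicClosure K)]
  set φ := algebraMap K (AlgebraicClosure K)
  have : CharP (AlgebraicClosure K) p := charP_of_injective_algebraMap φ.injective p
  intro α
  rw [or_iff_not_imp_left, not_not]
  intro hroot hroot₁
  have hα : α ≠ 0 := by
    rintro rfl
    rw [← coeff_zero_eq_aeval_zero', map_eq_zero] at hroot
    exact h0 hroot
  have hroot' : aeval α (derivative F) = 0 := by
    simpa [hroot, he, hα] using hroot₁
  refine not_isRoot_derivative_of_ode (F := F.map φ) (A := A.map φ) (d := φ d)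
    ((Polynomial.map_ne_zero_iff φ.injective).2 fun h => h0 (by simp [h]))
    (by rwa [natDegree_map]) (by rwa [natDegree_map]) (by simpa using hd) ?_ hα
    (by rwa [IsRoot, eval_map_algebraMap]) (by rwa [IsRoot, derivative_map, eval_map_algebraMap])
  simpa [Polynomial.map_mul, derivative_map] using congrArg (map φ) hode

end Polynomial

theorem two_mul_sub_one_mul_eq_neg_centralBinom_sq {a : ℕ → ℤ}
    (ha : ∀ n : ℕ, (a n : ℚ) = ((-1 : ℚ) / (2 * (n : ℚ) - 1)) * (Nat.choose (2 * n) n : ℚ) ^ 2)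
    (n : ℕ) : (2 * n - 1 : ℤ) * a n = -(n.centralBinom : ℤ) ^ 2 := by
  have hne : (2 * (n : ℚ) - 1) ≠ 0 := sub_ne_zero.2 (by exact_mod_cast (by omega : 2 * n ≠ 1))
  have h := ha n
  rw [← Nat.centralBinom_eq_two_mul_choose, div_mul_eq_mul_div, eq_div_iff hne] at h
  exact_mod_cast (by linear_combination h : (2 * n - 1 : ℚ) * a n = -(n.centralBinom : ℚ) ^ 2)

theorem succ_sq_mul_eq_of_two_mul_sub_one_mul_eq {a : ℕ → ℤ}
    (ha : ∀ n : ℕ, (2 * n - 1 : ℤ) * a n = -(n.centralBinom : ℤ) ^ 2) (n : ℕ) :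
    ((n : ℤ) + 1) ^ 2 * a (n + 1) = (16 * (n : ℤ) ^ 2 - 4) * a n := by
  have hc : ((n : ℤ) + 1) * (n + 1).centralBinom = 2 * (2 * n + 1) * n.centralBinom := by
    exact_mod_cast Nat.succ_mul_centralBinom_succ n
  have hsucc := ha (n + 1)
  push_cast at hsucc
  apply mul_left_cancel₀ (show (2 * (n : ℤ) + 1) ≠ 0 by positivity)
  linear_combination ((n : ℤ) + 1) ^ 2 * hsucc - 4 * (2 * (n : ℤ) + 1) ^ 2 * ha n
    - (((n : ℤ) + 1) * (n + 1).centralBinom + 2 * (2 * (n : ℤ) + 1) * n.centralBinom) * hc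

/-- For every prime `p ≥ 3`, the truncations `P_{1,p}` and `P_{2,p}` in degrees `< p` of
`f₁|_p` and `f₂|_p` are coprime in `𝔽_p[z]`. -/
theorem stmt13 (p : ℕ) (hp : p.Prime) (hp3 : 3 ≤ p)
    (a : ℕ → ℤ)
    (ha : ∀ n : ℕ, (a n : ℚ) =
      ((-1 : ℚ) / (2 * (n : ℚ) - 1)) * (Nat.choose (2 * n) n : ℚ) ^ 2)
    (P₁p P₂p : Polynomial (ZMod p))
    (hP₁p : P₁p = ∑ n ∈ Finset.range p,
      Polynomial.C (((Nat.choose (2 * n) n : ZMod p)) ^ 2) * Polynomial.X ^ n)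
    (hP₂p : P₂p = ∑ n ∈ Finset.range p, Polynomial.C ((a n : ZMod p)) * Polynomial.X ^ n) :
    IsCoprime P₁p P₂p := by
  have : Fact p.Prime := ⟨hp⟩
  have hcoeff₁ : ∀ k, P₁p.coeff k = if k < p then ((2 * k).choose k : ZMod p) ^ 2 else 0 :=
    hP₁p ▸ coeff_sum_range_C_mul_X_pow_s13 _ p
  have hcoeff₂ : ∀ k, P₂p.coeff k = if k < p then (a k : ZMod p) else 0 :=
    hP₂p ▸ coeff_sum_range_C_mul_X_pow_s13 _ p
  have hcentral := two_mul_sub_one_mul_eq_neg_centralBinom_sq ha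
  have hrel : P₁p = P₂p - C 2 * (X * derivative P₂p) := by
    ext k
    rw [coeff_sub, coeff_C_mul, coeff_X_mul_derivative_s13, hcoeff₁, hcoeff₂,
      ← Nat.centralBinom_eq_two_mul_choose]
    split_ifs
    · linear_combination (by exact_mod_cast congrArg (Int.cast : ℤ → ZMod p) (hcentral k) :
        (2 * k - 1 : ZMod p) * a k = -(k.centralBinom : ZMod p) ^ 2)
    · simp
  have hode : (1 - C 16 * X) * derivative (X * derivative P₂p) = C (-4) * P₂p :=
    hypergeometric_ode_of_coeff_eq_ite (ZMod.natCast_self p) (fun n => by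
      exact_mod_cast congrArg (Int.cast : ℤ → ZMod p)
        (succ_sq_mul_eq_of_two_mul_sub_one_mul_eq hcentral n)) hcoeff₂
  have h2 : (2 : ZMod p) ≠ 0 := fun h =>
    absurd (Nat.le_of_dvd two_pos ((ZMod.natCast_eq_zero_iff 2 p).1 (by exact_mod_cast h)))
      (by omega)
  have ha0 : a 0 = 1 := by simpa using hcentral 0
  rw [hrel]
  refine (isCoprime_sub_C_mul_X_mul_derivative_of_ode (by simp [hcoeff₂, hp.pos, ha0])
    (natDegree_lt_of_coeff_eq_ite hp.pos hcoeff₂) (by compute_degree) ?_ h2 hode).symm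
  rw [show (-4 : ZMod p) = -(2 * 2) by norm_num]
  exact neg_ne_zero.2 (mul_ne_zero h2 h2)
end

section
/- For every prime p, every integer r ≥ 2 and every integer n ≥ 0, the integer a_r(np) = (−1/(2np−1))·C(2np, np)^r satisfies a_r(np) ≡ C(2n, n)^r (mod p). (Combined with Lucas's theorem, this says that Λ_p applied to the reduction modulo p of f_r(z) = Σ_{n≥0} (−1/(2n−1))·C(2n,n)^r·z^n equals the reduction modulo p of g_r(z) = Σ_{n≥0} C(2n,n)^r·z^n.) -/
/-- For every prime `p`, every `r ≥ 2` and every `n ≥ 0`, the integer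
`a_r(np) = (−1/(2np−1)) C(2np, np)^r` satisfies `a_r(np) ≡ C(2n,n)^r (mod p)`.
The sequence of integers `a` is specified by its values in `ℚ`. -/
theorem stmt17 (p : ℕ) (hp : p.Prime) (r : ℕ) (hr : 2 ≤ r) (n : ℕ)
    (a : ℕ → ℤ)
    (ha : ∀ m : ℕ, (a m : ℚ) =
      ((-1 : ℚ) / (2 * (m : ℚ) - 1)) * (Nat.choose (2 * m) m : ℚ) ^ r) :
    a (n * p) ≡ (Nat.choose (2 * n) n : ℤ) ^ r [ZMOD (p : ℤ)] := by
  haveI : Fact p.Prime := ⟨hp⟩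
  -- integer identity: a m * (2m - 1) = - (C(2m,m))^r
  have key : ∀ m : ℕ, a m * (2 * (m : ℤ) - 1) = -(Nat.choose (2 * m) m : ℤ) ^ r := by
    intro m
    have hne : (2 * (m : ℚ) - 1) ≠ 0 := by
      rcases Nat.eq_zero_or_pos m with h | h
      · simp [h]
      · have : (1 : ℚ) ≤ (m : ℚ) := by exact_mod_cast h
        nlinarith
    have := ha m
    have hq : (a m : ℚ) * (2 * (m : ℚ) - 1) = -(Nat.choose (2 * m) m : ℚ) ^ r := by
      field_simp at this ⊢
      linarith [this]
    exact_mod_cast hq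
  -- Lucas: C(2np, np) ≡ C(2n, n) mod p
  have hlucas : (Nat.choose (2 * (n * p)) (n * p) : ℤ) ≡ (Nat.choose (2 * n) n : ℤ)
      [ZMOD (p : ℤ)] := by
    have h := Choose.choose_modEq_choose_mod_mul_choose_div
      (n := 2 * (n * p)) (k := n * p) (p := p)
    have hp0 : 0 < p := hp.pos
    have h1 : (2 * (n * p)) % p = 0 := by
      simp [Nat.mul_mod, Nat.mul_mod_left]
    have h2 : (n * p) % p = 0 := Nat.mul_mod_left n p
    have h3 : (2 * (n * p)) / p = 2 * n := by
      rw [show 2 * (n * p) = (2 * n) * p by ring, Nat.mul_div_cancel _ hp0]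
    have h4 : (n * p) / p = n := Nat.mul_div_cancel _ hp0
    rw [h1, h2, h3, h4] at h
    simpa using h
  -- work in ZMod p
  rw [Int.ModEq] at hlucas ⊢
  rw [← ZMod.intCast_eq_intCast_iff'] at hlucas ⊢
  push_cast at hlucas
  have hk := key (n * p)
  have hz : ((a (n * p) * (2 * ((n * p : ℕ) : ℤ) - 1) : ℤ) : ZMod p)
      = ((-(Nat.choose (2 * (n * p)) (n * p) : ℤ) ^ r : ℤ) : ZMod p) := by
    exact_mod_cast congrArg (fun x : ℤ => (x : ZMod p)) hk
  push_cast at hz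
  have hp0 : ((p : ZMod p)) = 0 := ZMod.natCast_self p
  rw [hp0] at hz
  push_cast
  rw [hlucas] at hz
  ring_nf at hz ⊢
  linear_combination -hz
end
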